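/- Let α : H → N and f : N → N' be finite-meet preserving maps between frames. Then Gl(f ∘ α), together with the maps π₁'* : N' → Gl(fα), n' ↦ (n',1), and f' : Gl(α) → Gl(fα), (n,h) ↦ (f(n),h), is the pushout in Frm∧ of π₁* : N → Gl(α), n ↦ (n,1), along f. -/

import Mathlib

section
variable {N N' H : Type*} [Order.Frame N] [Order.Frame N'] [Order.Frame H]

/-- The Artin glueing `Gl(γ) = {(n,h) : n ≤ γ h}` of `γ : H → M`. -/
def Gl {M : Type*} [Order.Frame M] (γ : H → M) : Type _ :=
  {p : M × H // p.1 ≤ γ p.2}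

instance {M : Type*} [Order.Frame M] (γ : H → M) : PartialOrder (Gl γ) :=
  inferInstanceAs (PartialOrder {p : M × H // p.1 ≤ γ p.2})

/-- Componentwise binary meet on `Gl(γ)`. -/
def Gl.inf {M : Type*} [Order.Frame M] {γ : H → M}
    (hγ_inf : ∀ a b, γ (a ⊓ b) = γ a ⊓ γ b) (p q : Gl γ) : Gl γ :=
  ⟨p.1 ⊓ q.1, le_trans (inf_le_inf p.2 q.2) (le_of_eq (hγ_inf _ _).symm)⟩

/-- The top element of `Gl(γ)`. -/
def Gl.top {M : Type*} [Order.Frame M] {γ : H → M} (hγ_top : γ ⊤ = ⊤) : Gl γ :=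
  ⟨⊤, hγ_top.ge⟩

/-- The kernel map `π₁* : M → Gl(γ)`, `m ↦ (m, ⊤)`. -/
def Gl.ker {M : Type*} [Order.Frame M] {γ : H → M} (hγ_top : γ ⊤ = ⊤)
    (m : M) : Gl γ :=
  ⟨(m, ⊤), le_top.trans hγ_top.ge⟩

/-- The comparison map `f' : Gl(α) → Gl(f ∘ α)`, `(n,h) ↦ (f n, h)`,
for a finite-meet preserving `f : N → N'`. -/
def Gl.push {α : H → N} {f : N → N'}
    (hf_inf : ∀ a b, f (a ⊓ b) = f a ⊓ f b) (p : Gl α) : Gl (f ∘ α) :=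
  ⟨(f p.1.1, p.1.2), by
    have h1 : p.1.1 ⊓ α p.1.2 = p.1.1 := inf_eq_left.mpr p.2
    have h2 : f p.1.1 = f p.1.1 ⊓ f (α p.1.2) := by rw [← hf_inf, h1]
    exact h2.trans_le inf_le_right⟩

end

/-!
Every `(n, h) ∈ Gl(γ)` is the meet of `(γ h, h)` and `(n, ⊤)`, so a finite-meet preserving map
out of `Gl(f ∘ α)` is determined by its values on these two kinds of elements. On `(f (α h), h)`,
the image of `(α h, h)` under `f'`, the mediating map must agree with `p`, and on `(n', ⊤)` with
`q`; this forces `ℓ (n', h) = p (α h, h) ⊓ q n'`, and that formula does preserve finite meets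
and factor `p` through `f'` because `p (α h, h) ⊓ q (f n) = p (α h, h) ⊓ p (n, ⊤) = p (n, h)`.
-/

namespace Gl

section Generators

variable {M H : Type*} [Order.Frame M] [Order.Frame H] {γ : H → M}

/-- The map `π₂* : H → Gl(γ)`, `h ↦ (γ h, h)`. -/
def ofSnd (γ : H → M) (h : H) : Gl γ :=
  ⟨(γ h, h), le_rfl⟩

theorem ofSnd_inf (hγ_inf : ∀ a b, γ (a ⊓ b) = γ a ⊓ γ b) (a b : H) :
    ofSnd γ (a ⊓ b) = Gl.inf hγ_inf (ofSnd γ a) (ofSnd γ b) :=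
  Subtype.ext (Prod.ext (hγ_inf a b) rfl)

theorem ofSnd_top (hγ_top : γ ⊤ = ⊤) : ofSnd γ ⊤ = Gl.top hγ_top :=
  Subtype.ext (Prod.ext hγ_top rfl)

theorem inf_ofSnd_ker (hγ_inf : ∀ a b, γ (a ⊓ b) = γ a ⊓ γ b) (hγ_top : γ ⊤ = ⊤) (x : Gl γ) :
    Gl.inf hγ_inf (ofSnd γ x.1.2) (ker hγ_top x.1.1) = x :=
  Subtype.ext (Prod.ext (inf_eq_right.mpr x.2) (inf_top_eq _))

end Generators

section Pushout

variable {N N' H : Type*} [Order.Frame N] [Order.Frame N'] {α : H → N} {f : N → N'}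

theorem push_ofSnd (hf_inf : ∀ a b, f (a ⊓ b) = f a ⊓ f b) (h : H) :
    push hf_inf (ofSnd α h) = ofSnd (f ∘ α) h :=
  rfl

variable [Order.Frame H]

theorem push_ker (hf_inf : ∀ a b, f (a ⊓ b) = f a ⊓ f b) (hα_top : α ⊤ = ⊤)
    (hfα_top : (f ∘ α) ⊤ = ⊤) (n : N) :
    push hf_inf (ker hα_top n) = ker hfα_top (f n) :=
  rfl

variable {X : Type*} [Order.Frame X] {p : Gl α → X} {q : N' → X}

def pushoutLift (f : N → N') (p : Gl α → X) (q : N' → X) (x : Gl (f ∘ α)) : X :=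
  p (ofSnd α x.1.2) ⊓ q x.1.1

theorem pushoutLift_inf (hα_inf : ∀ a b, α (a ⊓ b) = α a ⊓ α b)
    (hp_inf : ∀ x y, p (Gl.inf hα_inf x y) = p x ⊓ p y) (hq_inf : ∀ a b, q (a ⊓ b) = q a ⊓ q b)
    (hfα_inf : ∀ a b, (f ∘ α) (a ⊓ b) = (f ∘ α) a ⊓ (f ∘ α) b) (x y : Gl (f ∘ α)) :
    pushoutLift f p q (Gl.inf hfα_inf x y) = pushoutLift f p q x ⊓ pushoutLift f p q y := by
  change p (ofSnd α (x.1.2 ⊓ y.1.2)) ⊓ q (x.1.1 ⊓ y.1.1) = _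
  rw [ofSnd_inf hα_inf, hp_inf, hq_inf]
  exact inf_inf_inf_comm _ _ _ _

theorem pushoutLift_top (hα_top : α ⊤ = ⊤) (hp_top : p (Gl.top hα_top) = ⊤) (hq_top : q ⊤ = ⊤)
    (hfα_top : (f ∘ α) ⊤ = ⊤) :
    pushoutLift f p q (Gl.top hfα_top) = ⊤ := by
  change p (ofSnd α ⊤) ⊓ q ⊤ = ⊤
  rw [ofSnd_top hα_top, hp_top, hq_top, inf_top_eq]

theorem pushoutLift_push (hα_inf : ∀ a b, α (a ⊓ b) = α a ⊓ α b) (hα_top : α ⊤ = ⊤)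
    (hp_inf : ∀ x y, p (Gl.inf hα_inf x y) = p x ⊓ p y)
    (hpq : ∀ n, p (ker hα_top n) = q (f n)) (hf_inf : ∀ a b, f (a ⊓ b) = f a ⊓ f b)
    (x : Gl α) :
    pushoutLift f p q (push hf_inf x) = p x := by
  change p (ofSnd α x.1.2) ⊓ q (f x.1.1) = p x
  rw [← hpq, ← hp_inf, inf_ofSnd_ker]

theorem pushoutLift_ker (hα_top : α ⊤ = ⊤) (hp_top : p (Gl.top hα_top) = ⊤)
    (hfα_top : (f ∘ α) ⊤ = ⊤) (n' : N') :
    pushoutLift f p q (ker hfα_top n') = q n' := by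
  change p (ofSnd α ⊤) ⊓ q n' = q n'
  rw [ofSnd_top hα_top, hp_top, top_inf_eq]

theorem eq_pushoutLift (hf_inf : ∀ a b, f (a ⊓ b) = f a ⊓ f b)
    (hfα_inf : ∀ a b, (f ∘ α) (a ⊓ b) = (f ∘ α) a ⊓ (f ∘ α) b) (hfα_top : (f ∘ α) ⊤ = ⊤)
    {ℓ : Gl (f ∘ α) → X} (hℓ_inf : ∀ x y, ℓ (Gl.inf hfα_inf x y) = ℓ x ⊓ ℓ y)
    (hℓ_push : ∀ x, ℓ (push hf_inf x) = p x) (hℓ_ker : ∀ n', ℓ (ker hfα_top n') = q n') :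
    ℓ = pushoutLift f p q := by
  funext x
  calc ℓ x = ℓ (Gl.inf hfα_inf (push hf_inf (ofSnd α x.1.2)) (ker hfα_top x.1.1)) := by
        rw [push_ofSnd, inf_ofSnd_ker]
    _ = pushoutLift f p q x := by rw [hℓ_inf, hℓ_push, hℓ_ker]; rfl

end Pushout

end Gl

/-- The pushout in `Frm∧` of the kernel `π₁* : N → Gl(α)` along
`f : N → N'` is `Gl(f ∘ α)`, with injections `π₁'* : N' → Gl(f∘α)`,
`n' ↦ (n',⊤)`, and `f' : Gl(α) → Gl(f∘α)`, `(n,h) ↦ (f n, h)`: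
the square commutes and the universal property holds, with the mediating
morphism required to be finite-meet preserving. -/
theorem glueing_pushout
    {N N' H : Type*} [Order.Frame N] [Order.Frame N'] [Order.Frame H]
    (α : H → N) (hα_inf : ∀ a b, α (a ⊓ b) = α a ⊓ α b) (hα_top : α ⊤ = ⊤)
    (f : N → N') (hf_inf : ∀ a b, f (a ⊓ b) = f a ⊓ f b) (hf_top : f ⊤ = ⊤) :
    -- `f' ∘ π₁* = π₁'* ∘ f`
    (∀ n : N, Gl.push (α := α) hf_inf (Gl.ker hα_top n) =
        Gl.ker (γ := f ∘ α) (by simp [hα_top, hf_top]) (f n)) ∧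
    -- the universal property of the pushout in `Frm∧`
      (∀ (X : Type*) [Order.Frame X] (p : Gl α → X) (q : N' → X),
        (∀ x y : Gl α, p (Gl.inf hα_inf x y) = p x ⊓ p y) →
        p (Gl.top hα_top) = ⊤ →
        (∀ a b : N', q (a ⊓ b) = q a ⊓ q b) → q ⊤ = ⊤ →
        (∀ n : N, p (Gl.ker hα_top n) = q (f n)) →
        ∃! ℓ : Gl (f ∘ α) → X,
          (∀ x y : Gl (f ∘ α),
              ℓ (Gl.inf (γ := f ∘ α) (fun a b => by simp [hα_inf, hf_inf]) x y) =
                ℓ x ⊓ ℓ y) ∧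
            ℓ (Gl.top (γ := f ∘ α) (by simp [hα_top, hf_top])) = ⊤ ∧
            (∀ x : Gl α, ℓ (Gl.push hf_inf x) = p x) ∧
            (∀ n' : N', ℓ (Gl.ker (γ := f ∘ α) (by simp [hα_top, hf_top]) n') = q n')) := by
  have hfα_inf : ∀ a b, (f ∘ α) (a ⊓ b) = (f ∘ α) a ⊓ (f ∘ α) b := by simp [hα_inf, hf_inf]
  have hfα_top : (f ∘ α) ⊤ = ⊤ := by simp [hα_top, hf_top]
  refine ⟨Gl.push_ker hf_inf hα_top hfα_top, fun X _ p q hp_inf hp_top hq_inf hq_top hpq => ?_⟩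
  refine ⟨Gl.pushoutLift f p q,
    ⟨Gl.pushoutLift_inf hα_inf hp_inf hq_inf hfα_inf,
      Gl.pushoutLift_top hα_top hp_top hq_top hfα_top,
      Gl.pushoutLift_push hα_inf hα_top hp_inf hpq hf_inf,
      Gl.pushoutLift_ker hα_top hp_top hfα_top⟩,
    fun ℓ ⟨hℓ_inf, _, hℓ_push, hℓ_ker⟩ =>
      Gl.eq_pushoutLift hf_inf hfα_inf hfα_top hℓ_inf hℓ_push hℓ_ker⟩
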